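/- arXiv:2005.12244 — 2 statements merged into one kernel-verified Lean document; each statement's English description precedes it below -/
import Mathlib

section
/- Let k ≥ 2 and let G be the k-uniform hyperchain on n nodes with adjacency tensor A. Let b_j = e_j (the j-th standard basis vector) for j = 1,…,k−1, and define recursively b_j = A b_{j−k+1} b_{j−k+2} ⋯ b_{j−1} for j = k, …, n. Then each b_j is a nonzero multiple of a vector whose j-th coordinate is nonzero and whose coordinates with index > j vanish; consequently the matrix [b₁ b₂ ⋯ b_n] is upper triangular with nonzero diagonal, hence invertible, and the controllability subspace 𝒞(A, [e₁ ⋯ e_{k−1}]) = ℝⁿ. -/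
noncomputable section
open Classical

/-- Prepend `j` to the index tuple `js`. -/
def consIdx {n k : ℕ} (j : Fin n) (js : Fin (k - 1) → Fin n) : Fin k → Fin n :=
  fun t => if h : (t : ℕ) = 0 then j
    else js ⟨(t : ℕ) - 1, by have := t.isLt; omega⟩

/-- Adjacency tensor of a `k`-uniform hypergraph with hyperedge set `E`. -/
def adjT (n k : ℕ) (E : Finset (Finset (Fin n))) : (Fin k → Fin n) → ℝ :=
  fun j => if Function.Injective j ∧ Finset.image j Finset.univ ∈ E
    then ((Nat.factorial (k - 1) : ℝ))⁻¹ else 0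

/-- Contraction of a `k`-th order tensor along `k−1` modes with vectors `v`. -/
def tcontract {n k : ℕ} (A : (Fin k → Fin n) → ℝ) (v : Fin (k - 1) → (Fin n → ℝ)) :
    Fin n → ℝ :=
  fun j => ∑ js : Fin (k - 1) → Fin n, A (consIdx j js) * ∏ i, v i (js i)

/-- The controllability subspace `𝒞(A,B)`: the smallest subspace of `ℝⁿ` containing the
set `Bc` of input columns and closed under the contraction map `v₁,…,v_{k−1} ↦ A v₁ ⋯ v_{k−1}`. -/
def ctrlSpace {n k : ℕ} (A : (Fin k → Fin n) → ℝ) (Bc : Set (Fin n → ℝ)) :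
    Submodule ℝ (Fin n → ℝ) :=
  sInf {W : Submodule ℝ (Fin n → ℝ) | Bc ⊆ ↑W ∧
    ∀ v : Fin (k - 1) → (Fin n → ℝ), (∀ i, v i ∈ W) → tcontract A v ∈ W}

/-- The hyperedge `{l, l+1, …, l+k−1}` of a `k`-uniform hyperchain. -/
def chainEdge (n k l : ℕ) : Finset (Fin n) :=
  Finset.univ.filter (fun i => l ≤ (i : ℕ) ∧ (i : ℕ) < l + k)

/-- The hyperedge set of the `k`-uniform hyperchain on `n` nodes. -/
def chainE (n k : ℕ) : Finset (Finset (Fin n)) :=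
  (Finset.range (n - k + 1)).image (chainEdge n k)

/-- Adjacency tensor of the complete `k`-uniform hypergraph on `n` nodes. -/
def completeT (n k : ℕ) : (Fin k → Fin n) → ℝ :=
  fun j => if Function.Injective j then ((Nat.factorial (k - 1) : ℝ))⁻¹ else 0

/-
For `j ≥ k - 1`, `b_j` is the contraction of the hyperchain tensor with the `k - 1` preceding
vectors, which by induction are upper triangular with pivots `j - k + 1, …, j - 1`. A nonzero term
`A_{m, js} ∏ᵢ (b_{j-k+1+i})_{js i}` with `m ≥ j` therefore has `js i ≤ j - k + 1 + i`, and since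
`{m} ∪ js` must be a hyperedge of `k` consecutive nodes this forces `m = j` and `js` to be the
window itself. So `(b_j)_m = 0` for `m > j` and `(b_j)_j = (k-1)!⁻¹ ∏ pivots ≠ 0`. The columns
of the invertible upper triangular matrix `[b₁ ⋯ b_n]` span `ℝⁿ`, and each of them lies in every
subspace containing `e₁, …, e_{k-1}` and closed under the contraction.
-/

theorem Function.Injective.eq_self_of_le {α : Type*} [PartialOrder α] [WellFoundedLT α]
    {f : α → α} (hf : Function.Injective f) (hle : ∀ x, f x ≤ x) (x : α) : f x = x := by
  induction x using WellFoundedLT.induction with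
  | ind x ih =>
    by_contra hne
    exact hne (hf (ih (f x) (lt_of_le_of_ne (hle x) hne)))

theorem Matrix.isUnit_of_isUpperTriangular {m R : Type*} [Fintype m] [DecidableEq m]
    [LinearOrder m] [CommRing R] {M : Matrix m m R} (hM : M.IsUpperTriangular)
    (hdiag : ∀ i, IsUnit (M i i)) : IsUnit M := by
  rw [Matrix.isUnit_iff_isUnit_det, Matrix.det_of_isUpperTriangular hM]
  exact IsUnit.prod_univ_iff.2 hdiag

theorem Matrix.span_col_eq_top_of_isUnit {m R : Type*} [Fintype m] [DecidableEq m]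
    [CommRing R] {M : Matrix m m R} (hM : IsUnit M) :
    Submodule.span R (Set.range M.col) = ⊤ := by
  rw [← Matrix.range_mulVecLin, LinearMap.range_eq_top]
  exact Matrix.mulVec_surjective_iff_isUnit.2 hM

section Hyperchain

variable {n k : ℕ}

theorem Fin.val_sub_add_val_lt (j : Fin n) (hj : k - 1 ≤ (j : ℕ)) (i : Fin (k - 1)) :
    (j : ℕ) - (k - 1) + i < n := by
  omega

def window (j : Fin n) (hj : k - 1 ≤ (j : ℕ)) (i : Fin (k - 1)) : Fin n :=
  ⟨(j : ℕ) - (k - 1) + (i : ℕ), Fin.val_sub_add_val_lt j hj i⟩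

theorem mem_ctrlSpace_of_recursion {A : (Fin k → Fin n) → ℝ} (b : Fin n → Fin n → ℝ)
    (hbase : ∀ j : Fin n, (j : ℕ) < k - 1 → b j = Pi.single j 1)
    (hrec : ∀ j : Fin n, ∀ hj : k - 1 ≤ (j : ℕ), b j = tcontract A (fun i => b (window j hj i)))
    (j : Fin n) :
    b j ∈ ctrlSpace A {x | ∃ j : Fin n, (j : ℕ) < k - 1 ∧ x = (Pi.single j 1 : Fin n → ℝ)} := by
  refine Submodule.mem_sInf.2 fun W ⟨hB, hclosed⟩ => ?_
  induction j using WellFoundedLT.induction with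
  | ind j ih =>
    by_cases hj : (j : ℕ) < k - 1
    · exact hB ⟨j, hj, hbase j hj⟩
    · push Not at hj
      rw [hrec j hj]
      exact hclosed _ fun i => ih _ (Fin.lt_def.2 (by simp only [window]; omega))

theorem mem_chainEdge {l : ℕ} {x : Fin n} :
    x ∈ chainEdge n k l ↔ l ≤ (x : ℕ) ∧ (x : ℕ) < l + k := by
  simp [chainEdge]

theorem consIdx_succ (j : Fin n) (js : Fin (k - 1) → Fin n) (i : Fin (k - 1)) :
    consIdx j js ⟨(i : ℕ) + 1, by omega⟩ = js i := by
  simp [consIdx]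

theorem mem_image_consIdx (hk : 0 < k) {j x : Fin n} {js : Fin (k - 1) → Fin n} :
    x ∈ Finset.image (consIdx j js) Finset.univ ↔ x = j ∨ ∃ i, js i = x := by
  rw [Finset.mem_image]
  constructor
  · rintro ⟨t, -, rfl⟩
    by_cases ht : (t : ℕ) = 0
    · simp [consIdx, ht]
    · exact Or.inr ⟨⟨(t : ℕ) - 1, by omega⟩, by simp [consIdx, ht]⟩
  · rintro (rfl | ⟨i, rfl⟩)
    · exact ⟨⟨0, hk⟩, Finset.mem_univ _, by simp [consIdx]⟩
    · exact ⟨_, Finset.mem_univ _, consIdx_succ j js i⟩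

theorem Function.Injective.of_consIdx {j : Fin n} {js : Fin (k - 1) → Fin n}
    (h : Function.Injective (consIdx j js)) : Function.Injective js := fun a a' haa' => by
  have := congrArg Fin.val
    (h ((consIdx_succ j js a).trans (haa'.trans (consIdx_succ j js a').symm)))
  exact Fin.ext (by simpa using this)

theorem eq_window_of_adjT_chainE_ne_zero (hk : 2 ≤ k) {j m : Fin n} (hj : k - 1 ≤ (j : ℕ))
    (hjm : j ≤ m) {js : Fin (k - 1) → Fin n} (hjs : ∀ i, js i ≤ window j hj i)
    (hA : adjT n k (chainE n k) (consIdx m js) ≠ 0) : m = j ∧ js = window j hj := by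
  have hjs' : ∀ i : Fin (k - 1), (js i : ℕ) + (k - 1) ≤ j + i := fun i => by
    have := Fin.le_def.1 (hjs i); simp only [window] at this; omega
  have hjm' : (j : ℕ) ≤ m := hjm
  obtain ⟨hinj, hedge⟩ : Function.Injective (consIdx m js) ∧
      Finset.image (consIdx m js) Finset.univ ∈ chainE n k := by
    by_contra h; exact hA (if_neg h)
  obtain ⟨l, hl_range, hl_edge⟩ := Finset.mem_image.1 hedge
  have hl : l + k ≤ n := by have := Finset.mem_range.1 hl_range; have := m.isLt; omega
  have hmem : ∀ x : Fin n, (l ≤ (x : ℕ) ∧ (x : ℕ) < l + k) ↔ x = m ∨ ∃ i, js i = x := fun x => by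
    rw [← mem_chainEdge, hl_edge, mem_image_consIdx (by omega)]
  -- every `js i` lies below `m`, so `m` is the top node `l + k - 1` of the edge
  have hm : (m : ℕ) + 1 = l + k := by
    have hm_le := ((hmem m).2 (Or.inl rfl)).2
    rcases (hmem ⟨l + k - 1, by omega⟩).1 ⟨by simp only; omega, by simp only; omega⟩
      with h | ⟨i, h⟩
    · have := Fin.val_eq_of_eq h; simp only at this; omega
    · have := Fin.val_eq_of_eq h; have := hjs' i; simp only at *; omega
  have hl_js : ∀ i, l ≤ (js i : ℕ) := fun i => ((hmem (js i)).2 (Or.inr ⟨i, rfl⟩)).1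
  -- shifted down by `l`, `js` is an injective self-map of `Fin (k - 1)` below the identity
  have hshift : ∀ i : Fin (k - 1), (js i : ℕ) = l + i := by
    let σ : Fin (k - 1) → Fin (k - 1) := fun i => ⟨(js i : ℕ) - l, by
      have := hjs' i; have := hl_js i; omega⟩
    have hσ : Function.Injective σ := fun a a' h => hinj.of_consIdx <| Fin.ext <| by
      have h' := Fin.val_eq_of_eq h; have := hl_js a; have := hl_js a'; simp only [σ] at h'; omega
    intro i
    have h := Fin.val_eq_of_eq (hσ.eq_self_of_le (fun i => Fin.le_def.2 <| by
      have := hjs' i; simp only [σ]; omega) i)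
    simp only [σ] at h; have := hl_js i; omega
  have hmj : m = j := Fin.ext (by have := hshift ⟨0, by omega⟩; have := hjs' ⟨0, by omega⟩; omega)
  refine ⟨hmj, funext fun i => Fin.ext ?_⟩
  have := hshift i; simp only [window]; omega

theorem adjT_chainE_consIdx_window (hk : 0 < k) {j : Fin n} (hj : k - 1 ≤ (j : ℕ)) :
    adjT n k (chainE n k) (consIdx j (window j hj)) = ((Nat.factorial (k - 1) : ℝ))⁻¹ := by
  have hval : ∀ t : Fin k, (consIdx j (window j hj) t : ℕ) =
      if (t : ℕ) = 0 then (j : ℕ) else (j : ℕ) - (k - 1) + ((t : ℕ) - 1) := fun t => by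
    unfold consIdx; split_ifs <;> rfl
  refine if_pos ⟨fun t t' h => ?_, Finset.mem_image.2 ⟨(j : ℕ) - (k - 1), ?_, ?_⟩⟩
  · have h' := Fin.val_eq_of_eq h
    rw [hval, hval] at h'
    have := t.isLt; have := t'.isLt
    split_ifs at h' <;> exact Fin.ext (by omega)
  · exact Finset.mem_range.2 (by omega)
  · ext x
    rw [mem_chainEdge, mem_image_consIdx hk]
    constructor
    · rintro ⟨h₁, h₂⟩
      by_cases hxj : (x : ℕ) = j
      · exact Or.inl (Fin.ext hxj)
      · exact Or.inr ⟨⟨(x : ℕ) - ((j : ℕ) - (k - 1)), by omega⟩,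
          Fin.ext (by simp only [window]; omega)⟩
    · rintro (rfl | ⟨i, rfl⟩)
      · omega
      · simp only [window]; omega

section Contraction

variable {v : Fin (k - 1) → Fin n → ℝ}

theorem adjT_chainE_mul_prod_eq_zero (hk : 2 ≤ k) {j m : Fin n} (hj : k - 1 ≤ (j : ℕ))
    (hv : ∀ i x, window j hj i < x → v i x = 0) (hjm : j ≤ m) {js : Fin (k - 1) → Fin n}
    (hjs : ¬(m = j ∧ js = window j hj)) :
    adjT n k (chainE n k) (consIdx m js) * ∏ i, v i (js i) = 0 := by
  by_contra h
  obtain ⟨hA, hprod⟩ := mul_ne_zero_iff.1 h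
  have hjs_le : ∀ i, js i ≤ window j hj i := fun i =>
    not_lt.1 fun hlt => Finset.prod_ne_zero_iff.1 hprod i (Finset.mem_univ i) (hv i _ hlt)
  exact hjs (eq_window_of_adjT_chainE_ne_zero hk hj hjm hjs_le hA)

theorem tcontract_adjT_chainE_apply_of_lt (hk : 2 ≤ k) {j m : Fin n} (hj : k - 1 ≤ (j : ℕ))
    (hv : ∀ i x, window j hj i < x → v i x = 0) (hjm : j < m) :
    tcontract (adjT n k (chainE n k)) v m = 0 :=
  Finset.sum_eq_zero fun _ _ =>
    adjT_chainE_mul_prod_eq_zero hk hj hv hjm.le fun h => hjm.ne' h.1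

theorem tcontract_adjT_chainE_apply_self (hk : 2 ≤ k) {j : Fin n} (hj : k - 1 ≤ (j : ℕ))
    (hv : ∀ i x, window j hj i < x → v i x = 0) :
    tcontract (adjT n k (chainE n k)) v j =
      ((Nat.factorial (k - 1) : ℝ))⁻¹ * ∏ i, v i (window j hj i) := by
  rw [tcontract, Finset.sum_eq_single (window j hj), adjT_chainE_consIdx_window (by omega)]
  · exact fun js _ hjs => adjT_chainE_mul_prod_eq_zero hk hj hv le_rfl fun h => hjs h.2
  · exact fun h => absurd (Finset.mem_univ _) h

end Contraction

theorem upperTriangular_of_chain_recursion (hk : 2 ≤ k) (b : Fin n → Fin n → ℝ)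
    (hbase : ∀ j : Fin n, (j : ℕ) < k - 1 → b j = Pi.single j 1)
    (hrec : ∀ j : Fin n, ∀ hj : k - 1 ≤ (j : ℕ),
      b j = tcontract (adjT n k (chainE n k)) (fun i => b (window j hj i)))
    (j : Fin n) : b j j ≠ 0 ∧ ∀ i, j < i → b j i = 0 := by
  induction j using WellFoundedLT.induction with
  | ind j ih =>
    by_cases hj : (j : ℕ) < k - 1
    · rw [hbase j hj]
      exact ⟨by simp, fun i hji => Pi.single_eq_of_ne hji.ne' 1⟩
    · push Not at hj
      have hwin : ∀ i, window j hj i < j := fun i => Fin.lt_def.2 (by simp only [window]; omega)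
      have hv : ∀ i x, window j hj i < x → b (window j hj i) x = 0 :=
        fun i => (ih _ (hwin i)).2
      rw [hrec j hj]
      refine ⟨?_, fun i hji => tcontract_adjT_chainE_apply_of_lt hk hj hv hji⟩
      rw [tcontract_adjT_chainE_apply_self hk hj hv]
      exact mul_ne_zero (inv_ne_zero (Nat.cast_ne_zero.2 (Nat.factorial_ne_zero _)))
        (Finset.prod_ne_zero_iff.2 fun i _ => (ih _ (hwin i)).1)

end Hyperchain

/-- Prop 2 (sufficiency): for the `k`-uniform hyperchain on `n` nodes, setting
`b_j = e_j` for `j < k−1` and `b_j = A b_{j−k+1} ⋯ b_{j−1}` recursively, each `b_j`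
has nonzero `j`-th coordinate and vanishing coordinates above `j`; hence the matrix
`[b₁ ⋯ b_n]` is upper triangular with nonzero diagonal, hence invertible, and
controlling the first `k−1` nodes yields `𝒞(A,B) = ℝⁿ`. -/
theorem stmt9 {n k : ℕ} (hk : 2 ≤ k)
    (b : Fin n → (Fin n → ℝ))
    (hbase : ∀ j : Fin n, (j : ℕ) < k - 1 → b j = Pi.single j 1)
    (hrec : ∀ j : Fin n, ∀ hj : k - 1 ≤ (j : ℕ), b j =
      tcontract (adjT n k (chainE n k))
        (fun i : Fin (k - 1) =>
          b ⟨(j : ℕ) - (k - 1) + (i : ℕ), by have := i.isLt; have := j.isLt; omega⟩)) :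
    (∀ j : Fin n, b j j ≠ 0 ∧ ∀ i : Fin n, j < i → b j i = 0)
      ∧ IsUnit (Matrix.of (fun i j : Fin n => b j i))
      ∧ ctrlSpace (adjT n k (chainE n k))
          {x | ∃ j : Fin n, (j : ℕ) < k - 1 ∧ x = (Pi.single j 1 : Fin n → ℝ)} = ⊤ := by
  have htri := upperTriangular_of_chain_recursion hk b hbase hrec
  have hunit : IsUnit (Matrix.of (fun i j : Fin n => b j i)) :=
    Matrix.isUnit_of_isUpperTriangular (fun i j hji => (htri j).2 i hji)
      fun i => (htri i).1.isUnit
  refine ⟨htri, hunit, eq_top_iff.2 ?_⟩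
  rw [← Matrix.span_col_eq_top_of_isUnit hunit, Submodule.span_le]
  rintro _ ⟨j, rfl⟩
  exact mem_ctrlSpace_of_recursion b hbase hrec j
end
end

section
/- Let k be even and G be the complete k-uniform hypergraph on n > k nodes with adjacency tensor A. If the input matrix B consists of the standard basis vectors e₁,…,e_{n−2}, then every vector in the controllability subspace 𝒞(A,B) has its last two coordinates equal; hence dim 𝒞(A,B) ≤ n−1 and G is not controllable with n−2 control nodes. -/
/-!
The complete hypergraph tensor is invariant under every relabelling of the nodes, so contraction
with it commutes with the transposition of the last two nodes. Hence the subspace of vectors with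
equal last two coordinates is closed under contraction; it contains all control columns
`e₁, …, e_{n−2}`, so it contains `𝒞(A,B)`, and it is a proper subspace of `ℝⁿ`.
-/

noncomputable section
open Classical

lemma completeT_perm_comp {n k : ℕ} (σ : Equiv.Perm (Fin n)) (j : Fin k → Fin n) :
    completeT n k (σ ∘ j) = completeT n k j := by
  simp only [completeT, σ.injective.of_comp_iff]

lemma consIdx_comp {n k : ℕ} (σ : Fin n → Fin n) (j : Fin n) (js : Fin (k - 1) → Fin n) :
    consIdx (σ j) (σ ∘ js) = σ ∘ consIdx j js := by
  funext t
  by_cases ht : (t : ℕ) = 0 <;> simp [consIdx, ht]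

lemma tcontract_comp_perm {n k : ℕ} {A : (Fin k → Fin n) → ℝ} (σ : Equiv.Perm (Fin n))
    (hA : ∀ j, A (σ ∘ j) = A j) (v : Fin (k - 1) → Fin n → ℝ) (j : Fin n) :
    tcontract A (fun i => v i ∘ σ) j = tcontract A v (σ j) := by
  refine Fintype.sum_equiv ((Equiv.refl _).arrowCongr σ) _ _ fun js => ?_
  change A (consIdx j js) * ∏ i, v i (σ (js i)) =
    A (consIdx (σ j) (σ ∘ js)) * ∏ i, v i (σ (js i))
  rw [consIdx_comp, hA]

lemma tcontract_apply_eq_of_swap_invariant {n k : ℕ} {A : (Fin k → Fin n) → ℝ} {a b : Fin n}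
    (hA : ∀ j, A (Equiv.swap a b ∘ j) = A j) (v : Fin (k - 1) → Fin n → ℝ)
    (hv : ∀ i, v i a = v i b) :
    tcontract A v a = tcontract A v b := by
  have hvσ : ∀ i, v i ∘ Equiv.swap a b = v i := fun i => by
    funext x
    rcases eq_or_ne x a with rfl | hxa
    · simp [hv i]
    rcases eq_or_ne x b with rfl | hxb
    · simp [hv i]
    · simp [Equiv.swap_apply_of_ne_of_ne hxa hxb]
  simpa only [hvσ, Equiv.swap_apply_left] using tcontract_comp_perm _ hA v a

lemma ctrlSpace_le {n k : ℕ} {A : (Fin k → Fin n) → ℝ} {Bc : Set (Fin n → ℝ)}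
    {W : Submodule ℝ (Fin n → ℝ)} (hB : Bc ⊆ W)
    (hW : ∀ v : Fin (k - 1) → Fin n → ℝ, (∀ i, v i ∈ W) → tcontract A v ∈ W) :
    ctrlSpace A Bc ≤ W :=
  sInf_le ⟨hB, hW⟩

abbrev coordEqLocus (n : ℕ) (a b : Fin n) : Submodule ℝ (Fin n → ℝ) :=
  LinearMap.eqLocus (LinearMap.proj a) (LinearMap.proj b)

lemma coordEqLocus_ne_top {n : ℕ} {a b : Fin n} (hab : a ≠ b) : coordEqLocus n a b ≠ ⊤ := by
  intro h
  have : Pi.single a (1 : ℝ) ∈ coordEqLocus n a b := h ▸ Submodule.mem_top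
  simp [LinearMap.mem_eqLocus, Pi.single_eq_of_ne hab.symm] at this

lemma finrank_lt_of_le_coordEqLocus {n : ℕ} {a b : Fin n} (hab : a ≠ b)
    {V : Submodule ℝ (Fin n → ℝ)} (hV : V ≤ coordEqLocus n a b) :
    Module.finrank ℝ V < n :=
  calc Module.finrank ℝ V ≤ Module.finrank ℝ (coordEqLocus n a b) := Submodule.finrank_mono hV
    _ < Module.finrank ℝ (Fin n → ℝ) := Submodule.finrank_lt (coordEqLocus_ne_top hab)
    _ = n := Module.finrank_fin_fun ℝ

lemma ctrlSpace_completeT_le_coordEqLocus {n k : ℕ} {a b : Fin n} {Bc : Set (Fin n → ℝ)}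
    (hB : ∀ x ∈ Bc, x a = x b) : ctrlSpace (completeT n k) Bc ≤ coordEqLocus n a b :=
  ctrlSpace_le hB fun v hv =>
    tcontract_apply_eq_of_swap_invariant (completeT_perm_comp _) v hv

/-- For even `k`, the complete `k`-uniform hypergraph on `n > k` nodes is not controllable
with the `n−2` control nodes `1,…,n−2`: every vector in `𝒞(A,B)` has equal last two
coordinates, so `dim 𝒞(A,B) ≤ n−1` and `𝒞(A,B) ≠ ⊤`. -/
theorem stmt11 {n k : ℕ} (hk : 2 ≤ k) (hkn : k < n) :
    (∀ x ∈ ctrlSpace (completeT n k)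
        {x | ∃ i : Fin n, (i : ℕ) < n - 2 ∧ x = (Pi.single i 1 : Fin n → ℝ)},
      x ⟨n - 2, by omega⟩ = x ⟨n - 1, by omega⟩)
    ∧ Module.finrank ℝ (ctrlSpace (completeT n k)
        {x | ∃ i : Fin n, (i : ℕ) < n - 2 ∧ x = (Pi.single i 1 : Fin n → ℝ)}) ≤ n - 1
    ∧ ctrlSpace (completeT n k)
        {x | ∃ i : Fin n, (i : ℕ) < n - 2 ∧ x = (Pi.single i 1 : Fin n → ℝ)} ≠ ⊤ := by
  set a : Fin n := ⟨n - 2, by omega⟩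
  set b : Fin n := ⟨n - 1, by omega⟩
  have hab : a ≠ b := Fin.ne_of_val_ne (by simp only [a, b]; omega)
  have hle : ctrlSpace (completeT n k)
      {x | ∃ i : Fin n, (i : ℕ) < n - 2 ∧ x = (Pi.single i 1 : Fin n → ℝ)} ≤
        coordEqLocus n a b := by
    refine ctrlSpace_completeT_le_coordEqLocus ?_
    rintro x ⟨i, hi, rfl⟩
    rw [Pi.single_eq_of_ne (Fin.ne_of_val_ne (by simp only [a]; omega)),
      Pi.single_eq_of_ne (Fin.ne_of_val_ne (by simp only [b]; omega))]
  have hrank := finrank_lt_of_le_coordEqLocus hab hle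
  exact ⟨fun x hx => hle hx, by omega,
    fun htop => coordEqLocus_ne_top hab (top_le_iff.mp (htop ▸ hle))⟩
end
end
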